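/- For every mesh function W : {0,...,J} x {0,...,K} -> C with W_{0,k} = 0, W_{j,0} = 0 and W_{j,K} = 0 for all j, k, the quantity (W,W)_{omegaT_h, s_N} = (s_N W, W)_{omega_h} + ((s_N^- W)_J, W_J)_{omega_hy}*h_x is real and satisfies (W,W)_{omegaT_h, s_N} >= (1/3)*( ||W||_{omega_h}^2 + (h_x/2)*||W_J||_{omega_hy}^2 ), where ||W||_{omega_h}^2 = sum_{j=1}^{J-1} sum_{k=1}^{K-1} |W_{j,k}|^2*h_x*h_y and ||W_J||_{omega_hy}^2 = sum_{k=1}^{K-1} |W_{J,k}|^2*h_y. -/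

import Mathlib

/-! Summation by parts in `x` (per column, with `W_0 = 0`) and in `y` (per row, with
`W_{·,0} = W_{·,K} = 0`) writes `(W,W)_{ω̃_h,s_N}` as `h_x h_y` times a real combination of squared
values and squared first differences of `W`; the only surviving boundary term, at `j = J`,
combines with `s_{Nx}^-` into `½|W_J|²`. Since `|a - b|² ≤ 2|a|² + 2|b|²`, each sum of squared
differences is at most four times the corresponding sum of squares (plus `2‖W_J‖²` in `x`),
which leaves a third of `‖W‖² + ½‖W_J‖²`. -/

noncomputable section

/-- Backward difference quotient in `x`: `(∂̄_x W)_{j,k} = (W_{j,k} - W_{j-1,k})/h_x`. -/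
def dbx (hx : ℝ) (W : ℕ → ℕ → ℂ) : ℕ → ℕ → ℂ := fun j k => (W j k - W (j - 1) k) / (hx : ℂ)

/-- Second difference quotient in `x`. -/
def ddxF (hx : ℝ) (W : ℕ → ℕ → ℂ) : ℕ → ℕ → ℂ := fun j k =>
  (W (j + 1) k - 2 * W j k + W (j - 1) k) / (hx : ℂ) ^ 2

/-- Second difference quotient in `y`. -/
def ddyF (hy : ℝ) (W : ℕ → ℕ → ℂ) : ℕ → ℕ → ℂ := fun j k =>
  (W j (k + 1) - 2 * W j k + W j (k - 1)) / (hy : ℂ) ^ 2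

/-- `s_{Nx} = I + (h_x²/12) ∂_x ∂̄_x`. -/
def sNxF (hx : ℝ) (W : ℕ → ℕ → ℂ) : ℕ → ℕ → ℂ := fun j k =>
  W j k + ((hx ^ 2 / 12 : ℝ) : ℂ) * ddxF hx W j k

/-- `s_{Ny} = I + (h_y²/12) ∂_y ∂̄_y`. -/
def sNyF (hy : ℝ) (W : ℕ → ℕ → ℂ) : ℕ → ℕ → ℂ := fun j k =>
  W j k + ((hy ^ 2 / 12 : ℝ) : ℂ) * ddyF hy W j k

/-- `s_N = I + (h_x²/12) ∂_x ∂̄_x + (h_y²/12) ∂_y ∂̄_y`. -/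
def sNF (hx hy : ℝ) (W : ℕ → ℕ → ℂ) : ℕ → ℕ → ℂ := fun j k =>
  W j k + ((hx ^ 2 / 12 : ℝ) : ℂ) * ddxF hx W j k + ((hy ^ 2 / 12 : ℝ) : ℂ) * ddyF hy W j k

/-- `Δ_{hN} = s_{Ny} ∂_x ∂̄_x + s_{Nx} ∂_y ∂̄_y`. -/
def dHNF (hx hy : ℝ) (W : ℕ → ℕ → ℂ) : ℕ → ℕ → ℂ := fun j k =>
  sNyF hy (ddxF hx W) j k + sNxF hx (ddyF hy W) j k

/-- `(s_{Nx}^- W)_{j,k} = (1/12) W_{j-1,k} + (5/12) W_{j,k}`. -/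
def sNxm (W : ℕ → ℕ → ℂ) : ℕ → ℕ → ℂ := fun j k =>
  (1 / 12 : ℂ) * W (j - 1) k + (5 / 12 : ℂ) * W j k

/-- `(s_N^- W)_{j,k} = (s_{Nx}^- W)_{j,k} + (h_y²/24)(∂_y ∂̄_y W)_{j,k}`. -/
def sNm (hy : ℝ) (W : ℕ → ℕ → ℂ) : ℕ → ℕ → ℂ := fun j k =>
  sNxm W j k + ((hy ^ 2 / 24 : ℝ) : ℂ) * ddyF hy W j k

/-- `(U,W)_{ω_h} = ∑_{j=1}^{J-1} ∑_{k=1}^{K-1} U_{j,k} conj(W_{j,k}) h_x h_y`. -/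
def innO (J K : ℕ) (hx hy : ℝ) (U W : ℕ → ℕ → ℂ) : ℂ :=
  ∑ j ∈ Finset.Icc 1 (J - 1), ∑ k ∈ Finset.Icc 1 (K - 1),
    U j k * (starRingEnd ℂ) (W j k) * ((hx * hy : ℝ) : ℂ)

/-- `(U,W)_{ω̃_h} = ∑_{j=1}^{J} ∑_{k=1}^{K-1} U_{j,k} conj(W_{j,k}) h_x h_y`. -/
def innT (J K : ℕ) (hx hy : ℝ) (U W : ℕ → ℕ → ℂ) : ℂ :=
  ∑ j ∈ Finset.Icc 1 J, ∑ k ∈ Finset.Icc 1 (K - 1),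
    U j k * (starRingEnd ℂ) (W j k) * ((hx * hy : ℝ) : ℂ)

/-- `(Z,Z')_{ω_{hy}} = ∑_{k=1}^{K-1} Z_k conj(Z'_k) h_y`. -/
def innY (K : ℕ) (hy : ℝ) (Z Z' : ℕ → ℂ) : ℂ :=
  ∑ k ∈ Finset.Icc 1 (K - 1), Z k * (starRingEnd ℂ) (Z' k) * ((hy : ℝ) : ℂ)

/-- `(U,W)_{ω̃_h, s_N} = (s_N U, W)_{ω_h} + ((s_N^- U)_J, W_J)_{ω_{hy}} h_x`. -/
def innSN (J K : ℕ) (hx hy : ℝ) (U W : ℕ → ℕ → ℂ) : ℂ :=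
  innO J K hx hy (sNF hx hy U) W
    + innY K hy (fun k => sNm hy U J k) (fun k => W J k) * ((hx : ℝ) : ℂ)

/-- `(U,W)_{ω̃_h, s_{Nx}} = (s_{Nx} U, W)_{ω_h} + ((s_{Nx}^- U)_J, W_J)_{ω_{hy}} h_x`. -/
def innSNx (J K : ℕ) (hx hy : ℝ) (U W : ℕ → ℕ → ℂ) : ℂ :=
  innO J K hx hy (sNxF hx U) W
    + innY K hy (fun k => sNxm U J k) (fun k => W J k) * ((hx : ℝ) : ℂ)


open Finset ComplexConjugate

section OneDimensional

variable (v : ℕ → ℂ)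

theorem norm_sub_sq_le_two_mul (a b : ℂ) : ‖a - b‖ ^ 2 ≤ 2 * (‖a‖ ^ 2 + ‖b‖ ^ 2) :=
  (pow_le_pow_left₀ (norm_nonneg _) (norm_sub_le a b) 2).trans add_sq_le

theorem sub_mul_conj_sub (a b : ℂ) : (a - b) * (conj a - conj b) = (‖a - b‖ : ℂ) ^ 2 := by
  rw [← map_sub, Complex.mul_conj']

/-- Discrete Green's formula for the second difference on `{0, …, n + 1}`. -/
theorem sum_secondDiff_mul_conj (n : ℕ) :
    ∑ j ∈ Icc 1 n, (v (j + 1) - 2 * v j + v (j - 1)) * conj (v j)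
      = (v (n + 1) - v n) * conj (v (n + 1)) - (v 1 - v 0) * conj (v 0)
        - ((∑ j ∈ Icc 1 (n + 1), ‖v j - v (j - 1)‖ ^ 2 : ℝ) : ℂ) := by
  induction n with
  | zero =>
    simp only [zero_add, Icc_self, sum_singleton, Nat.sub_self, Icc_eq_empty_of_lt zero_lt_one,
      sum_empty]
    push_cast
    linear_combination -sub_mul_conj_sub (v 1) (v 0)
  | succ n ih =>
    rw [sum_Icc_succ_top (by omega), ih, sum_Icc_succ_top (by omega : 1 ≤ n + 1 + 1)]
    simp only [Nat.add_sub_cancel]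
    push_cast
    linear_combination -sub_mul_conj_sub (v (n + 1 + 1)) (v (n + 1))

theorem sum_secondDiff_mul_conj_of_eq_zero (n : ℕ) (h0 : v 0 = 0) (hn : v (n + 1) = 0) :
    ∑ j ∈ Icc 1 n, (v (j + 1) - 2 * v j + v (j - 1)) * conj (v j)
      = -((∑ j ∈ Icc 1 (n + 1), ‖v j - v (j - 1)‖ ^ 2 : ℝ) : ℂ) := by
  rw [sum_secondDiff_mul_conj, h0, hn, map_zero]
  ring

theorem sum_compactStencil_mul_conj (n : ℕ) (h0 : v 0 = 0) :
    ∑ j ∈ Icc 1 n, (v j + (v (j + 1) - 2 * v j + v (j - 1)) / 12) * conj (v j)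
        + (v n / 12 + 5 * v (n + 1) / 12) * conj (v (n + 1))
      = ((∑ j ∈ Icc 1 n, ‖v j‖ ^ 2 + ‖v (n + 1)‖ ^ 2 / 2
          - (∑ j ∈ Icc 1 (n + 1), ‖v j - v (j - 1)‖ ^ 2) / 12 : ℝ) : ℂ) := by
  have hsplit : ∑ j ∈ Icc 1 n, (v j + (v (j + 1) - 2 * v j + v (j - 1)) / 12) * conj (v j)
      = ∑ j ∈ Icc 1 n, (‖v j‖ : ℂ) ^ 2
        + (∑ j ∈ Icc 1 n, (v (j + 1) - 2 * v j + v (j - 1)) * conj (v j)) / 12 := by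
    rw [sum_div, ← sum_add_distrib]
    refine sum_congr rfl fun j _ => ?_
    rw [← Complex.mul_conj']
    ring
  rw [hsplit, sum_secondDiff_mul_conj, h0, map_zero]
  push_cast
  linear_combination (1 / 2 : ℂ) * Complex.mul_conj' (v (n + 1))

theorem sum_norm_sub_sq_le (n : ℕ) :
    ∑ j ∈ Icc 1 (n + 1), ‖v j - v (j - 1)‖ ^ 2
      ≤ 2 * ‖v 0‖ ^ 2 + 4 * ∑ j ∈ Icc 1 n, ‖v j‖ ^ 2 + 2 * ‖v (n + 1)‖ ^ 2 := by
  induction n with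
  | zero =>
    simp only [zero_add, Icc_self, sum_singleton, Nat.sub_self, Icc_eq_empty_of_lt zero_lt_one,
      sum_empty]
    linarith [norm_sub_sq_le_two_mul (v 1) (v 0)]
  | succ n ih =>
    rw [sum_Icc_succ_top (by omega : 1 ≤ n + 1 + 1),
      sum_Icc_succ_top (by omega : 1 ≤ n + 1) (fun j => ‖v j‖ ^ 2)]
    simp only [Nat.add_sub_cancel]
    linarith [norm_sub_sq_le_two_mul (v (n + 1 + 1)) (v (n + 1))]

end OneDimensional

section Mesh

variable {hx hy : ℝ} (W : ℕ → ℕ → ℂ)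

theorem sNF_eq (hx0 : hx ≠ 0) (hy0 : hy ≠ 0) (j k : ℕ) :
    sNF hx hy W j k = W j k + (W (j + 1) k - 2 * W j k + W (j - 1) k) / 12
      + (W j (k + 1) - 2 * W j k + W j (k - 1)) / 12 := by
  have : (hx : ℂ) ≠ 0 := Complex.ofReal_ne_zero.mpr hx0
  have : (hy : ℂ) ≠ 0 := Complex.ofReal_ne_zero.mpr hy0
  simp only [sNF, ddxF, ddyF]
  push_cast
  field_simp

theorem sNm_eq (hy0 : hy ≠ 0) (j k : ℕ) :
    sNm hy W j k = W (j - 1) k / 12 + 5 * W j k / 12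
      + (W j (k + 1) - 2 * W j k + W j (k - 1)) / 24 := by
  have : (hy : ℂ) ≠ 0 := Complex.ofReal_ne_zero.mpr hy0
  simp only [sNm, sNxm, ddyF]
  push_cast
  field_simp

/-- `(W,W)_{ω̃_h,s_N} / (h_x h_y)` after summation by parts, on the mesh with `J = m + 1`,
`K = l + 1`. -/
def meshEnergy (m l : ℕ) : ℝ :=
  ∑ k ∈ Icc 1 l, (∑ j ∈ Icc 1 m, ‖W j k‖ ^ 2 + ‖W (m + 1) k‖ ^ 2 / 2
      - (∑ j ∈ Icc 1 (m + 1), ‖W j k - W (j - 1) k‖ ^ 2) / 12)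
    - (∑ j ∈ Icc 1 m, ∑ k ∈ Icc 1 (l + 1), ‖W j k - W j (k - 1)‖ ^ 2) / 12
    - (∑ k ∈ Icc 1 (l + 1), ‖W (m + 1) k - W (m + 1) (k - 1)‖ ^ 2) / 24

theorem innSN_self_eq_meshEnergy (m l : ℕ) (hx0 : hx ≠ 0) (hy0 : hy ≠ 0) (hW0 : ∀ k, W 0 k = 0)
    (hWy0 : ∀ j, W j 0 = 0) (hWyK : ∀ j, W j (l + 1) = 0) :
    innSN (m + 1) (l + 1) hx hy W W = ((hx * hy * meshEnergy W m l : ℝ) : ℂ) := by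
  have hsplit : innSN (m + 1) (l + 1) hx hy W W = ((hx * hy : ℝ) : ℂ) *
      (∑ k ∈ Icc 1 l, (∑ j ∈ Icc 1 m,
          (W j k + (W (j + 1) k - 2 * W j k + W (j - 1) k) / 12) * conj (W j k)
          + (W m k / 12 + 5 * W (m + 1) k / 12) * conj (W (m + 1) k))
        + (∑ j ∈ Icc 1 m, ∑ k ∈ Icc 1 l,
          (W j (k + 1) - 2 * W j k + W j (k - 1)) * conj (W j k)) / 12
        + (∑ k ∈ Icc 1 l, (W (m + 1) (k + 1) - 2 * W (m + 1) k + W (m + 1) (k - 1))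
          * conj (W (m + 1) k)) / 24) := by
    simp only [innSN, innO, innY, sNF_eq W hx0 hy0, sNm_eq W hy0, Nat.add_sub_cancel]
    simp only [sum_comm (s := Icc 1 m), mul_add, mul_sum, sum_mul, sum_div, ← sum_add_distrib]
    refine sum_congr rfl fun k _ => ?_
    rw [add_right_comm (Finset.sum (Icc 1 m) _) _ (Finset.sum (Icc 1 m) _), ← sum_add_distrib,
      add_assoc (Finset.sum (Icc 1 m) _)]
    push_cast
    congr 1
    · exact sum_congr rfl fun j _ => by ring
    · ring
  rw [hsplit, meshEnergy]
  have hcol := fun k => sum_compactStencil_mul_conj (fun j => W j k) m (hW0 k)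
  have hrow := fun j => sum_secondDiff_mul_conj_of_eq_zero (W j) l (hWy0 j) (hWyK j)
  beta_reduce at hcol
  simp only [hcol, hrow]
  push_cast
  rw [sum_neg_distrib]
  ring

theorem sum_norm_sq_div_three_le_meshEnergy (m l : ℕ) (hW0 : ∀ k, W 0 k = 0)
    (hWy0 : ∀ j, W j 0 = 0) (hWyK : ∀ j, W j (l + 1) = 0) :
    (∑ j ∈ Icc 1 m, ∑ k ∈ Icc 1 l, ‖W j k‖ ^ 2 + (∑ k ∈ Icc 1 l, ‖W (m + 1) k‖ ^ 2) / 2) / 3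
      ≤ meshEnergy W m l := by
  have hdx := sum_le_sum fun k (_ : k ∈ Icc 1 l) => sum_norm_sub_sq_le (W · k) m
  have hdy := sum_le_sum fun j (_ : j ∈ Icc 1 m) => sum_norm_sub_sq_le (W j) l
  have hdyJ := sum_norm_sub_sq_le (W (m + 1)) l
  simp only [hW0, hWy0, hWyK, norm_zero, zero_pow two_ne_zero, mul_zero,
    add_zero, zero_add, sum_add_distrib, ← mul_sum] at hdx hdy hdyJ
  rw [meshEnergy]
  simp only [sum_sub_distrib, sum_add_distrib, ← sum_div]
  rw [sum_comm (s := Icc 1 l) (t := Icc 1 m)] at hdx ⊢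
  linarith

end Mesh

/-- for every mesh function `W` vanishing at `j = 0`, `k = 0`, `k = K`,
the quantity `(W,W)_{ω̃_h, s_N}` is real and bounded below by
`(1/3)(‖W‖²_{ω_h} + (h_x/2)‖W_J‖²_{ω_{hy}})`. -/
theorem stmt15 (J K : ℕ) (hJ : 2 ≤ J) (hK : 2 ≤ K) (hx hy : ℝ)
    (hhx : 0 < hx) (hhy : 0 < hy) (W : ℕ → ℕ → ℂ)
    (hW0 : ∀ k, W 0 k = 0) (hWy0 : ∀ j, W j 0 = 0) (hWyK : ∀ j, W j K = 0) :
    (innSN J K hx hy W W).im = 0 ∧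
    1 / 3 * ((∑ j ∈ Finset.Icc 1 (J - 1), ∑ k ∈ Finset.Icc 1 (K - 1),
          ‖W j k‖ ^ 2 * (hx * hy))
        + hx / 2 * ∑ k ∈ Finset.Icc 1 (K - 1), ‖W J k‖ ^ 2 * hy)
      ≤ (innSN J K hx hy W W).re := by
  obtain ⟨m, rfl⟩ : ∃ m, J = m + 1 := ⟨J - 1, by omega⟩
  obtain ⟨l, rfl⟩ : ∃ l, K = l + 1 := ⟨K - 1, by omega⟩
  rw [innSN_self_eq_meshEnergy W m l hhx.ne' hhy.ne' hW0 hWy0 hWyK, Complex.ofReal_im,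
    Complex.ofReal_re]
  refine ⟨rfl, ?_⟩
  have hbound := mul_le_mul_of_nonneg_left
    (sum_norm_sq_div_three_le_meshEnergy W m l hW0 hWy0 hWyK) (mul_pos hhx hhy).le
  simp only [Nat.add_sub_cancel, ← sum_mul]
  linarith
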